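/- arXiv:1601.02637 — 4 statements merged into one kernel-verified Lean document; each statement's English description precedes it below -/
import Mathlib

section
/- Let P_fwd be a probability density on ℝ bounded above by p_max > 0, and suppose Crooks' theorem holds: P_fwd(W) = e^{β(W−ΔF)} P_rev(−W) for a probability density P_rev, with β > 0. For w^δ ∈ ℝ define 1 − δ := ∫_{w^δ}^∞ P_rev(−W) dW. Then 1 − δ ≤ (p_max/β) e^{−β(w^δ − ΔF)}. -/
/-!
Crooks' relation rewrites the reverse density as `P_rev(-W) = e^{-β(W-ΔF)} P_fwd(W)`, so the bound
`P_fwd ≤ p_max` dominates the integrand by an exponential whose tail integral over `[w^δ, ∞)` is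
`(p_max/β) e^{-β(w^δ-ΔF)}`.
-/

open MeasureTheory Real Set

section ExpTail

variable {β : ℝ}

lemma exp_neg_mul_sub_eq (β a x : ℝ) :
    exp (-(β * (x - a))) = exp (β * a) * exp (-β * x) := by
  rw [← exp_add]; ring_nf

lemma integrableOn_Ici_exp_neg_mul_sub (hβ : 0 < β) (a c : ℝ) :
    IntegrableOn (fun x => exp (-(β * (x - a)))) (Ici c) := by
  rw [integrableOn_Ici_iff_integrableOn_Ioi]
  simp_rw [exp_neg_mul_sub_eq β a]
  exact (integrableOn_exp_mul_Ioi (neg_neg_of_pos hβ) c).const_mul _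

lemma integral_Ici_exp_neg_mul_sub (hβ : 0 < β) (a c : ℝ) :
    ∫ x in Ici c, exp (-(β * (x - a))) = exp (-(β * (c - a))) / β := by
  rw [integral_Ici_eq_integral_Ioi]
  simp_rw [exp_neg_mul_sub_eq β a]
  rw [integral_const_mul, integral_exp_mul_Ioi (neg_neg_of_pos hβ)]
  field_simp

lemma setIntegral_Ici_le_of_le_mul_exp {f : ℝ → ℝ} {C a c : ℝ} (hβ : 0 < β)
    (hf : IntegrableOn f (Ici c)) (hle : ∀ x ∈ Ici c, f x ≤ C * exp (-(β * (x - a)))) :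
    ∫ x in Ici c, f x ≤ C / β * exp (-(β * (c - a))) :=
  calc ∫ x in Ici c, f x
      ≤ ∫ x in Ici c, C * exp (-(β * (x - a))) :=
        setIntegral_mono_on hf ((integrableOn_Ici_exp_neg_mul_sub hβ a c).const_mul C)
          measurableSet_Ici hle
    _ = C / β * exp (-(β * (c - a))) := by
        rw [integral_const_mul, integral_Ici_exp_neg_mul_sub hβ]
        ring

end ExpTail

theorem tail_prob_bound_general
    (β ΔF pmax wδ : ℝ) (hβ : 0 < β)
    (Pfwd Prev : ℝ → ℝ)
    (hPf_le : ∀ W, Pfwd W ≤ pmax)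
    (hCrooks : ∀ W, Pfwd W = Real.exp (β * (W - ΔF)) * Prev (-W))
    (hInt : IntegrableOn (fun W => Prev (-W)) (Set.Ici wδ)) :
    ∫ W in Set.Ici wδ, Prev (-W) ≤ (pmax / β) * Real.exp (-(β * (wδ - ΔF))) := by
  refine setIntegral_Ici_le_of_le_mul_exp hβ hInt fun W _ => ?_
  calc Prev (-W) = exp (-(β * (W - ΔF))) * Pfwd W := by
        rw [hCrooks, ← mul_assoc, ← exp_add, neg_add_cancel, exp_zero, one_mul]
    _ ≤ exp (-(β * (W - ΔF))) * pmax := by gcongr; exact hPf_le W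
    _ = pmax * exp (-(β * (W - ΔF))) := mul_comm _ _

/-- Tail-probability bound from Crooks' theorem and a bound on the forward density. -/
theorem tail_prob_bound
    (β ΔF pmax wδ : ℝ) (hβ : 0 < β) (hpmax : 0 < pmax)
    (Pfwd Prev : ℝ → ℝ)
    (hPf_nonneg : ∀ W, 0 ≤ Pfwd W)
    (hPr_nonneg : ∀ W, 0 ≤ Prev W)
    (hPf_norm : ∫ W, Pfwd W = 1)
    (hPr_norm : ∫ W, Prev W = 1)
    (hPf_le : ∀ W, Pfwd W ≤ pmax)
    (hCrooks : ∀ W, Pfwd W = Real.exp (β * (W - ΔF)) * Prev (-W))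
    (hInt : IntegrableOn (fun W => Prev (-W)) (Set.Ici wδ)) :
    ∫ W in Set.Ici wδ, Prev (-W) ≤ (pmax / β) * Real.exp (-(β * (wδ - ΔF))) :=
  tail_prob_bound_general β ΔF pmax wδ hβ Pfwd Prev hPf_le hCrooks hInt
end

section
/- Under Crooks' theorem P_fwd(W) = e^{β(W−ΔF)} P_rev(−W) with β > 0 and P_rev(−W) ≤ q_max for all W, for W^ε ∈ ℝ with 1 − ε := ∫_{−∞}^{W^ε} P_fwd(W) dW > 0, the quantity N_ε := 1/(1−ε) satisfies N_ε ≥ exp(−β(W^ε − ΔF) + H_rev), where H_rev := −log(q_max/β). -/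
open MeasureTheory Real Set

/-!
Crooks' relation together with `P_rev ≤ q_max` bounds the forward work density by
`q_max e^{β(W - ΔF)}`, whose integral over `(-∞, W^ε]` is `(q_max / β) e^{β(W^ε - ΔF)}`.
Hence `1 - ε` is at most this quantity, and `N_ε = 1/(1 - ε)` is at least its reciprocal,
which is `exp(-β(W^ε - ΔF) + H_rev)`.
-/

lemma exp_mul_sub_eq_exp_mul_div (β a x : ℝ) :
    exp (β * (x - a)) = exp (β * x) / exp (β * a) := by
  rw [mul_sub, exp_sub]

lemma integrableOn_exp_mul_sub_Iic {β : ℝ} (hβ : 0 < β) (a c : ℝ) :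
    IntegrableOn (fun x => exp (β * (x - a))) (Iic c) := by
  simp_rw [exp_mul_sub_eq_exp_mul_div β a]
  exact (integrableOn_exp_mul_Iic hβ c).div_const _

lemma integral_exp_mul_sub_Iic {β : ℝ} (hβ : 0 < β) (a c : ℝ) :
    ∫ x in Iic c, exp (β * (x - a)) = exp (β * (c - a)) / β := by
  simp_rw [exp_mul_sub_eq_exp_mul_div β a]
  rw [integral_div, integral_exp_mul_Iic hβ c]
  ring

lemma setIntegral_Iic_le_of_le_mul_exp {f : ℝ → ℝ} {β a q c : ℝ} (hβ : 0 < β)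
    (hf : IntegrableOn f (Iic c)) (hle : ∀ x ∈ Iic c, f x ≤ q * exp (β * (x - a))) :
    ∫ x in Iic c, f x ≤ q / β * exp (β * (c - a)) :=
  calc ∫ x in Iic c, f x
      ≤ ∫ x in Iic c, q * exp (β * (x - a)) :=
        setIntegral_mono_on hf ((integrableOn_exp_mul_sub_Iic hβ a c).const_mul q)
          measurableSet_Iic hle
    _ = q / β * exp (β * (c - a)) := by
        rw [integral_const_mul, integral_exp_mul_sub_Iic hβ]
        ring

theorem forward_expected_trials_bound_general
    (β ΔF qmax Wε : ℝ) (hβ : 0 < β) (hqmax : 0 < qmax)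
    (Pfwd Prev : ℝ → ℝ)
    (hPr_le : ∀ W, Prev (-W) ≤ qmax)
    (hCrooks : ∀ W, Pfwd W = Real.exp (β * (W - ΔF)) * Prev (-W))
    (hInt : IntegrableOn Pfwd (Set.Iic Wε))
    (oneMinusε : ℝ)
    (hεdef : oneMinusε = ∫ W in Set.Iic Wε, Pfwd W)
    (hεpos : 0 < oneMinusε) :
    1 / oneMinusε ≥ Real.exp (-(β * (Wε - ΔF)) + (-Real.log (qmax / β))) := by
  have hPf_le (W : ℝ) : Pfwd W ≤ qmax * exp (β * (W - ΔF)) := by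
    rw [hCrooks, mul_comm qmax]
    exact mul_le_mul_of_nonneg_left (hPr_le W) (exp_pos _).le
  have hbound : oneMinusε ≤ qmax / β * exp (β * (Wε - ΔF)) :=
    hεdef ▸ setIntegral_Iic_le_of_le_mul_exp hβ hInt fun W _ => hPf_le W
  rw [ge_iff_le, exp_add, exp_neg, exp_neg, exp_log (div_pos hqmax hβ), ← mul_inv, mul_comm,
    ← one_div]
  exact one_div_le_one_div_of_le hεpos hbound

/-- Forward-protocol bound on the expected number of trials,
    with `H_rev = -log (qmax/β)`. -/
theorem forward_expected_trials_bound
    (β ΔF qmax Wε : ℝ) (hβ : 0 < β) (hqmax : 0 < qmax)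
    (Pfwd Prev : ℝ → ℝ)
    (hPf_nonneg : ∀ W, 0 ≤ Pfwd W)
    (hPr_nonneg : ∀ W, 0 ≤ Prev W)
    (hPf_norm : ∫ W, Pfwd W = 1)
    (hPr_norm : ∫ W, Prev W = 1)
    (hPr_le : ∀ W, Prev (-W) ≤ qmax)
    (hCrooks : ∀ W, Pfwd W = Real.exp (β * (W - ΔF)) * Prev (-W))
    (hInt : IntegrableOn Pfwd (Set.Iic Wε))
    (oneMinusε : ℝ)
    (hεdef : oneMinusε = ∫ W in Set.Iic Wε, Pfwd W)
    (hεpos : 0 < oneMinusε) :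
    1 / oneMinusε ≥ Real.exp (-(β * (Wε - ΔF)) + (-Real.log (qmax / β))) :=
  forward_expected_trials_bound_general β ΔF qmax Wε hβ hqmax Pfwd Prev hPr_le hCrooks hInt
    oneMinusε hεdef hεpos
end

section
/- Let P_rev be a probability density on ℝ with M := ∫ e^{βW} P_rev(−W) dW finite and positive, β > 0. Define ΔF := (1/β) log M and, for w^δ ∈ ℝ, the truncated estimate (ΔF)_est := (1/β) log(∫_{−∞}^{w^δ} e^{βW} P_rev(−W) dW), assumed well-defined (truncated integral positive). Then (ΔF)_est ≤ ΔF, and moreover ΔF − (ΔF)_est ≥ −(1/β) log(1 − e^{β w^δ}(1−δ)/M), where 1−δ := ∫_{w^δ}^∞ P_rev(−W) dW (assuming e^{β w^δ}(1−δ) < M). -/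
/-!
Split `M = ∫ e^{βW} P_rev(-W) dW` at `w^δ`. The part below `w^δ` is the truncated integral `T`,
and on the tail `e^{βW} ≥ e^{β w^δ}`, so the tail is at least `e^{β w^δ}(1 - δ)`. Hence
`0 < T ≤ M - e^{β w^δ}(1 - δ) ≤ M`, and both claims follow by monotonicity of `log`.
-/

open MeasureTheory Real Set

theorem mul_setIntegral_Ioi_le_of_monotone {μ : Measure ℝ} {φ g : ℝ → ℝ} {a : ℝ}
    (hφ : Monotone φ) (hφa : 0 ≤ φ a) (hg : ∀ x, 0 ≤ g x)
    (hint : IntegrableOn (fun x => φ x * g x) (Ioi a) μ) :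
    φ a * ∫ x in Ioi a, g x ∂μ ≤ ∫ x in Ioi a, φ x * g x ∂μ := by
  rw [← integral_const_mul]
  refine integral_mono_of_nonneg (.of_forall fun x => mul_nonneg hφa (hg x)) hint ?_
  filter_upwards [ae_restrict_mem measurableSet_Ioi] with x hx
  exact mul_le_mul_of_nonneg_right (hφ (le_of_lt hx)) (hg x)

theorem neg_log_one_sub_div_le_log_sub_log {T M x : ℝ} (hT : 0 < T) (hM : 0 < M)
    (hTx : T ≤ M - x) : -log (1 - x / M) ≤ log M - log T := by
  have hMx : 0 < M - x := hT.trans_le hTx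
  have hdiv : 1 - x / M = (M - x) / M := by field_simp
  rw [hdiv, log_div hMx.ne' hM.ne']
  linarith [log_le_log hT hTx]

theorem truncated_estimate_error_general
    (β wδ : ℝ) (hβ : 0 < β)
    (Prev : ℝ → ℝ)
    (hPr_nonneg : ∀ W, 0 ≤ Prev W)
    (hInt : Integrable (fun W => Real.exp (β * W) * Prev (-W)))
    (M : ℝ) (hM : M = ∫ W, Real.exp (β * W) * Prev (-W))
    (ΔF : ℝ) (hΔF : ΔF = (1 / β) * Real.log M)
    (ΔFest : ℝ)
    (hest : ΔFest = (1 / β) * Real.log (∫ W in Set.Iic wδ, Real.exp (β * W) * Prev (-W)))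
    (htrunc_pos : 0 < ∫ W in Set.Iic wδ, Real.exp (β * W) * Prev (-W))
    (oneMinusδ : ℝ) (hδdef : oneMinusδ = ∫ W in Set.Ici wδ, Prev (-W)) :
    ΔFest ≤ ΔF ∧
      ΔF - ΔFest ≥ -(1 / β) * Real.log (1 - Real.exp (β * wδ) * oneMinusδ / M) := by
  set T := ∫ W in Iic wδ, exp (β * W) * Prev (-W)
  have hsplit : T + ∫ W in Ioi wδ, exp (β * W) * Prev (-W) = M :=
    hM ▸ intervalIntegral.integral_Iic_add_Ioi hInt.integrableOn hInt.integrableOn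
  have htail : exp (β * wδ) * oneMinusδ ≤ ∫ W in Ioi wδ, exp (β * W) * Prev (-W) := by
    rw [hδdef, integral_Ici_eq_integral_Ioi]
    exact mul_setIntegral_Ioi_le_of_monotone (φ := fun W => exp (β * W))
      (fun x y hxy => by dsimp only; gcongr) (exp_pos _).le
      (fun W => hPr_nonneg (-W)) hInt.integrableOn
  have hδ_nonneg : 0 ≤ oneMinusδ :=
    hδdef ▸ setIntegral_nonneg measurableSet_Ici fun W _ => hPr_nonneg (-W)
  have hT_le : T ≤ M - exp (β * wδ) * oneMinusδ := by linarith
  have htail_nonneg : 0 ≤ exp (β * wδ) * oneMinusδ := mul_nonneg (exp_pos _).le hδ_nonneg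
  have hβ_inv : 0 ≤ 1 / β := by positivity
  subst hΔF hest
  constructor
  · exact mul_le_mul_of_nonneg_left (log_le_log htrunc_pos (by linarith)) hβ_inv
  · have hlog := neg_log_one_sub_div_le_log_sub_log htrunc_pos (by linarith) hT_le
    linarith [mul_le_mul_of_nonneg_left hlog hβ_inv]

/-- The truncated estimate underestimates ΔF, and the error is lower-bounded
    via the tail bound. -/
theorem truncated_estimate_error
    (β wδ : ℝ) (hβ : 0 < β)
    (Prev : ℝ → ℝ)
    (hPr_nonneg : ∀ W, 0 ≤ Prev W)
    (hPr_norm : ∫ W, Prev W = 1)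
    (hInt : Integrable (fun W => Real.exp (β * W) * Prev (-W)))
    (M : ℝ) (hM : M = ∫ W, Real.exp (β * W) * Prev (-W)) (hMpos : 0 < M)
    (ΔF : ℝ) (hΔF : ΔF = (1 / β) * Real.log M)
    (ΔFest : ℝ)
    (hest : ΔFest = (1 / β) * Real.log (∫ W in Set.Iic wδ, Real.exp (β * W) * Prev (-W)))
    (htrunc_pos : 0 < ∫ W in Set.Iic wδ, Real.exp (β * W) * Prev (-W))
    (oneMinusδ : ℝ) (hδdef : oneMinusδ = ∫ W in Set.Ici wδ, Prev (-W))
    (htail_lt : Real.exp (β * wδ) * oneMinusδ < M) :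
    ΔFest ≤ ΔF ∧
      ΔF - ΔFest ≥ -(1 / β) * Real.log (1 - Real.exp (β * wδ) * oneMinusδ / M) :=
  truncated_estimate_error_general β wδ hβ Prev hPr_nonneg hInt M hM ΔF hΔF ΔFest hest htrunc_pos
    oneMinusδ hδdef
end

section
/- Let β > 0, k > 0, α > 0, and define P_fwd(W) := (β/(α Γ(k))) (βW/α)^{k−1} e^{−βW/α} · 1_{W ≥ 0} and P_rev(−W) := (β/(α' Γ(k))) (βW/α')^{k−1} e^{−βW/α'} · 1_{W ≥ 0} where α' := α/(1+α) (the reverse-protocol parameter satisfies |α_rev| = α/(1+α) after sign conventions). Then P_fwd(W)/P_rev(−W) = C e^{βW} for all W > 0, where C is a constant independent of W; consequently Crooks' theorem holds with e^{−β ΔF} = C, i.e., ΔF = (k/β) log(1+α). -/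
open Real ProbabilityTheory

/-!
Both work distributions are gamma densities of shape `k`, with rates `β / α` and `β / α'`.
Two gamma densities of the same shape differ by the factor `(r / r') ^ k * exp ((r' - r) * W)`,
and the choice `α' = α / (1 + α)` makes the rate difference `β / α' - β / α` equal to `β`
and the rate ratio equal to `(1 + α)⁻¹`, so `C = (1 + α) ^ (-k) = exp (-k log (1 + α))`.
-/

lemma gammaPDFReal_eq_mul_gammaPDFReal (a : ℝ) {r r' : ℝ} (hr : 0 ≤ r) (hr' : 0 < r')
    (x : ℝ) :
    gammaPDFReal a r x = (r / r') ^ a * exp ((r' - r) * x) * gammaPDFReal a r' x := by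
  unfold gammaPDFReal
  split_ifs
  · have hrate : (r / r') ^ a * r' ^ a = r ^ a := by
      rw [div_rpow hr hr'.le, div_mul_cancel₀ _ (rpow_pos_of_pos hr' a).ne']
    have hexp : exp ((r' - r) * x) * exp (-(r' * x)) = exp (-(r * x)) := by
      rw [← exp_add]; ring_nf
    calc r ^ a / Gamma a * x ^ (a - 1) * exp (-(r * x))
        = (r / r') ^ a * r' ^ a / Gamma a * x ^ (a - 1)
            * (exp ((r' - r) * x) * exp (-(r' * x))) := by rw [hrate, hexp]
      _ = _ := by ring
  · simp

lemma mul_rpow_sub_one_mul_exp_eq_gammaPDFReal (a : ℝ) {r x : ℝ} (hr : 0 < r) (hx : 0 ≤ x) :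
    r / Gamma a * (r * x) ^ (a - 1) * exp (-(r * x)) = gammaPDFReal a r x := by
  rw [gammaPDFReal, if_pos hx, mul_rpow hr.le hx, rpow_sub_one hr.ne']
  field_simp

theorem dilute_gas_crooks_general
    (α β k : ℝ) (hα : 0 < α) (hβ : 0 < β)
    (α' : ℝ) (hα' : α' = α / (1 + α))
    (Pfwd Prevd : ℝ → ℝ)
    (hPf : ∀ W, Pfwd W =
      (β / (α * Real.Gamma k)) * (β * W / α) ^ (k - 1) * Real.exp (-(β * W / α)))
    (hPr : ∀ W, Prevd W =
      (β / (α' * Real.Gamma k)) * (β * W / α') ^ (k - 1) * Real.exp (-(β * W / α'))) :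
    ∃ C : ℝ, (∀ W : ℝ, 0 < W → Pfwd W = C * Real.exp (β * W) * Prevd W) ∧
      C = Real.exp (-(β * ((k / β) * Real.log (1 + α)))) := by
  have hα'pos : 0 < α' := by rw [hα']; positivity
  have hgamma : ∀ θ > 0, ∀ W > 0, β / (θ * Gamma k) * (β * W / θ) ^ (k - 1)
      * exp (-(β * W / θ)) = gammaPDFReal k (β / θ) W := fun θ hθ W hW => by
    rw [div_mul_eq_div_div, mul_div_right_comm]
    exact mul_rpow_sub_one_mul_exp_eq_gammaPDFReal k (by positivity) hW.le
  have hdiff : β / α' - β / α = β := by rw [hα']; field_simp; ring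
  have hratio : β / α / (β / α') = (1 + α)⁻¹ := by rw [hα']; field_simp
  refine ⟨_, fun W hW => ?_, rfl⟩
  rw [hPf, hPr, hgamma α hα W hW, hgamma α' hα'pos W hW,
    gammaPDFReal_eq_mul_gammaPDFReal k (r' := β / α') (by positivity) (by positivity),
    hdiff, hratio, inv_rpow (by positivity), ← rpow_neg (by positivity),
    rpow_def_of_pos (by positivity)]
  congr 3
  field_simp

/-- Dilute-gas work distributions satisfy Crooks' theorem with
    ΔF = (k/β) log(1+α). -/
theorem dilute_gas_crooks
    (α β k : ℝ) (hα : 0 < α) (hβ : 0 < β) (hk : 0 < k)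
    (α' : ℝ) (hα' : α' = α / (1 + α))
    (Pfwd Prevd : ℝ → ℝ)
    (hPf : ∀ W, Pfwd W =
      (β / (α * Real.Gamma k)) * (β * W / α) ^ (k - 1) * Real.exp (-(β * W / α)))
    (hPr : ∀ W, Prevd W =
      (β / (α' * Real.Gamma k)) * (β * W / α') ^ (k - 1) * Real.exp (-(β * W / α'))) :
    ∃ C : ℝ, (∀ W : ℝ, 0 < W → Pfwd W = C * Real.exp (β * W) * Prevd W) ∧
      C = Real.exp (-(β * ((k / β) * Real.log (1 + α)))) :=
  dilute_gas_crooks_general α β k hα hβ α' hα' Pfwd Prevd hPf hPr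
end
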